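/- If M = M[P,Q] is a lattice path matroid with branch-width at most k, then the square-width of the presentation [P,Q] is strictly less than ⌈3k/2⌉. -/

import Mathlib

open Matroid

/-- Steps: `true` is a North step, `false` is an East step. -/
def nCount (w : List Bool) : ℕ := w.count true

def eCount (w : List Bool) : ℕ := w.count false

/-- `P` and `Q` are lattice paths from `(0,0)` to `(m,r)` with `P` never above `Q`. -/
structure IsLatticePair (P Q : List Bool) (m r : ℕ) : Prop where
  lenP : P.length = m + r
  lenQ : Q.length = m + r
  northP : nCount P = r
  northQ : nCount Q = r
  notAbove : ∀ i, nCount (P.take i) ≤ nCount (Q.take i)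

/-- The (1-indexed) positions of the North steps of a path. -/
def northPositions (w : List Bool) : List ℕ :=
  ((List.range w.length).filter (fun j => w.getD j false)).map (· + 1)

/-- `X` is a partial transversal of the intervals `N_i = [l_i, u_i]`, `i < r`, where
`u_i` (resp. `l_i`) is the position of the `i`-th North step of `P` (resp. `Q`). -/
def IsPartialTransversal (P Q : List Bool) (r : ℕ) (X : Set ℕ) : Prop :=
  ∃ f : ℕ → ℕ, Set.InjOn f X ∧ ∀ x ∈ X, f x < r ∧
    (northPositions Q).getD (f x) 0 ≤ x ∧ x ≤ (northPositions P).getD (f x) 0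

/-- `M` is the lattice path matroid `M[P,Q]`: the transversal matroid on `[m+r]`
whose independent sets are the partial transversals of the intervals `N_i`. -/
def IsLPM (M : Matroid ℕ) (P Q : List Bool) (m r : ℕ) : Prop :=
  IsLatticePair P Q m r ∧ M.E = Set.Icc 1 (m + r) ∧
    ∀ X : Set ℕ, M.Indep X ↔ X ⊆ M.E ∧ IsPartialTransversal P Q r X

/-- `[P,Q]` has a `k × k` square at `i`: the length-`i` prefix of `P` has exactly `k`
more East steps than that of `Q`, and the prefix of `Q` has `k` more North steps. -/
def HasSquareAt (P Q : List Bool) (k i : ℕ) : Prop :=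
  eCount (P.take i) = eCount (Q.take i) + k ∧ nCount (Q.take i) = nCount (P.take i) + k

/-- The square-width of a presentation: the largest `k` such that it has a `k × k` square. -/
noncomputable def squareWidth (P Q : List Bool) : ℕ :=
  sSup {k | ∃ i, HasSquareAt P Q k i}

/-- `N` is a minor of `M`: obtained by contracting a set `C` and deleting a set `D`. -/
def IsMinorOf {α : Type*} (N M : Matroid α) : Prop :=
  ∃ C D : Set α, C ⊆ M.E ∧ D ⊆ M.E ∧ Disjoint C D ∧
    N = ((M✶ ↾ (M.E \ C))✶) ↾ ((M.E \ C) \ D)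

/-- An isomorphism between matroids: a bijection of ground sets preserving independence. -/
def MatroidIso {α β : Type*} (M : Matroid α) (N : Matroid β) : Prop :=
  ∃ f : α → β, Set.BijOn f M.E N.E ∧ ∀ X ⊆ M.E, (M.Indep X ↔ N.Indep (f '' X))

/-- `N` is isomorphic to a minor of `M`. -/
def IsIsoMinorOf {α β : Type*} (N : Matroid α) (M : Matroid β) : Prop :=
  ∃ N' : Matroid β, IsMinorOf N' M ∧ MatroidIso N' N

/-- `M` is (isomorphic to) the uniform matroid `U_{r,n}`. -/
def IsUniform {α : Type*} (M : Matroid α) (r n : ℕ) : Prop :=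
  M.E.encard = (n : ℕ∞) ∧ ∀ X ⊆ M.E, (M.Indep X ↔ X.encard ≤ (r : ℕ∞))

/-- The rank (in `ℕ∞`) of a set in a matroid. -/
noncomputable def eRk {α : Type*} (M : Matroid α) (A : Set α) : ℕ∞ :=
  ⨆ I : {I : Set α // M.Indep I ∧ I ⊆ A}, (I : Set α).encard

/-- Binary trees, used to model the cubic trees of branch decompositions. -/
inductive BTree (α : Type*) where
  | leaf : α → BTree α
  | node : BTree α → BTree α → BTree α

def BTree.leafList {α : Type*} : BTree α → List α
  | .leaf a => [a]
  | .node l r => l.leafList ++ r.leafList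

def BTree.subtrees {α : Type*} : BTree α → List (BTree α)
  | .leaf a => [.leaf a]
  | .node l r => .node l r :: (l.subtrees ++ r.subtrees)

/-- The connectivity value `λ(A) = r(A) + r(E \ A) − r(E) + 1`. -/
noncomputable def lamVal {α : Type*} (M : Matroid α) (A : Set α) : ℕ∞ :=
  _root_.eRk M A + _root_.eRk M (M.E \ A) - _root_.eRk M M.E + 1

/-- A branch decomposition of `M`: a (cubic) tree whose leaves are bijectively
labelled by the elements of `M`. -/
def IsBranchDecomp {α : Type*} (M : Matroid α) (t : BTree α) : Prop :=
  t.leafList.Nodup ∧ {x | x ∈ t.leafList} = M.E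

/-- The width of a branch decomposition: the maximum of `λ` over the edges
(equivalently, over the leaf sets of the subtrees). -/
noncomputable def decompWidth {α : Type*} (M : Matroid α) (t : BTree α) : ℕ∞ :=
  (t.subtrees.map (fun s => lamVal M {x | x ∈ s.leafList})).foldr max 0

/-- The branch-width of a matroid. -/
noncomputable def branchWidth {α : Type*} (M : Matroid α) : ℕ∞ :=
  sInf {w | ∃ t : BTree α, IsBranchDecomp M t ∧ decompWidth M t = w}

/-- The lattice path `P(X)` associated to a subset `X` of `[len]`. -/
noncomputable def pathWord (X : Set ℕ) (len : ℕ) : List Bool :=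
  (List.range len).map (fun j => @decide ((j + 1) ∈ X) (Classical.propDecidable _))

def glue (PB QB PT QT : List Bool) (k : ℕ) : List Bool × List Bool :=
  (PB.take (PB.length - k) ++ PT.drop k, QB.take (QB.length - k) ++ QT.drop k)

/-!
Present `M[P,Q]` by the intervals `[L j, U j]`, `j < r`, where `L j` and `U j` are the positions of
the `j`-th North steps of `Q` and `P`; both are strictly increasing. An `s × s` square at `i`
means that the `s` intervals with `n ≤ j < n + s` all contain `i` and `i + 1`. Let the frame `C`
consist of the `L j`, `j < n`, and the `U j`, `j ≥ n + s`, and let `S` be the set of the `2s` ends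
of the square's intervals. For every `s`-subset `T` of `S`, `C ∪ T` is a basis (match each element
with the interval indexed by its rank), so `r(B) ≥ |B ∩ C| + min(|B ∩ S|, s)` for every `B`.
In a branch decomposition some subtree has between `q` and `2q - 2` leaves in `S`, where
`q = ⌈2s/3⌉`; for its leaf set `A` this gives `r(A) + r(E \ A) ≥ |C| + s + q ≥ r(M) + q`, so the
width is at least `q + 1`. Width at most `k` therefore forces `⌈2s/3⌉ < k`, i.e. `s < ⌈3k/2⌉`.
-/

open Finset

/-- The position of the `j`-th North step of `w`, counting `j` from `0` and positions from `1`. -/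
def northPos (w : List Bool) (j : ℕ) : ℕ := (northPositions w).getD j 0

theorem northPositions_cons (b : Bool) (w : List Bool) :
    northPositions (b :: w) = (if b then [1] else []) ++ (northPositions w).map (· + 1) := by
  simp only [northPositions, List.length_cons, List.range_succ_eq_map, List.filter_cons,
    List.filter_map, List.map_map]
  cases b <;> simp [Function.comp_def]

theorem northPositions_length (w : List Bool) : (northPositions w).length = nCount w := by
  induction w with
  | nil => rfl
  | cons b w ih => cases b <;> simp [northPositions_cons, nCount, ih] at *

theorem northPos_le_iff {w : List Bool} {j : ℕ} (hj : j < nCount w) (p : ℕ) :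
    northPos w j ≤ p ↔ j < nCount (w.take p) := by
  induction w generalizing j p with
  | nil => simp [nCount] at hj
  | cons b w ih =>
    have hlen := northPositions_length w
    cases b <;> rcases p with _ | p <;> rcases j with _ | j <;>
      simp_all [northPos, northPositions_cons, nCount, List.getD_eq_getElem?_getD]

theorem northPos_mem_Icc {w : List Bool} {j : ℕ} (hj : j < nCount w) :
    northPos w j ∈ Icc 1 w.length := by
  refine mem_Icc.2 ⟨?_, (northPos_le_iff hj _).2 (by rwa [List.take_length])⟩
  by_contra! h
  simpa [nCount] using (northPos_le_iff hj 0).1 (by omega)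

theorem northPos_strictMonoOn (w : List Bool) : StrictMonoOn (northPos w) (Set.Iio (nCount w)) := by
  have hsorted : (northPositions w).Pairwise (· < ·) :=
    (List.pairwise_lt_range.filter _).map _ fun _ _ h => Nat.add_lt_add_right h 1
  intro j hj j' hj' hjj'
  rw [← northPositions_length] at hj hj'
  simp only [northPos, List.getD_eq_getElem _ _ hj, List.getD_eq_getElem _ _ hj']
  exact List.pairwise_iff_getElem.1 hsorted j j' hj hj' hjj'

/-- `IsPartialTransversal P Q r` is `IsIntervalTransversal (northPos Q) (northPos P) r`. -/
def IsIntervalTransversal (L U : ℕ → ℕ) (r : ℕ) (X : Set ℕ) : Prop :=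
  ∃ f : ℕ → ℕ, Set.InjOn f X ∧ ∀ x ∈ X, f x < r ∧ L (f x) ≤ x ∧ x ≤ U (f x)

theorem IsIntervalTransversal.mono {L U : ℕ → ℕ} {r : ℕ} {X Y : Set ℕ}
    (hX : IsIntervalTransversal L U r X) (hYX : Y ⊆ X) : IsIntervalTransversal L U r Y :=
  let ⟨f, hinj, hf⟩ := hX
  ⟨f, hinj.mono hYX, fun x hx => hf x (hYX hx)⟩

theorem isIntervalTransversal_of_rank {L U : ℕ → ℕ} {r : ℕ} {X : Finset ℕ} (hX : #X ≤ r)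
    (h : ∀ x ∈ X, L #{y ∈ X | y < x} ≤ x ∧ x ≤ U #{y ∈ X | y < x}) :
    IsIntervalTransversal L U r X := by
  have hmono : StrictMonoOn (fun x => #{y ∈ X | y < x}) X := by
    intro x hx x' hx' hlt
    refine card_lt_card ⟨monotone_filter_right _ fun y _ (hy : y < x) => hy.trans hlt, ?_⟩
    intro hsub
    simpa using hsub (mem_filter.2 ⟨hx, hlt⟩)
  refine ⟨_, hmono.injOn, fun x hx => ⟨?_, h x hx⟩⟩
  exact (card_lt_card (filter_ssubset.2 ⟨x, hx, lt_irrefl x⟩ : {y ∈ X | y < x} ⊂ X)).trans_le hX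

theorem card_filter_lt_add_card_filter_gt {α : Type*} [LinearOrder α] {X : Finset α} {x : α}
    (hx : x ∈ X) :
    #{y ∈ X | y < x} + #{y ∈ X | x < y} + 1 = #X := by
  have hsplit : X = {y ∈ X | y < x} ∪ insert x {y ∈ X | x < y} := by
    ext y
    simp only [mem_union, mem_insert, mem_filter]
    constructor
    · intro hy
      rcases lt_trichotomy y x with h | rfl | h <;> simp [*]
    · rintro (⟨hy, -⟩ | rfl | ⟨hy, -⟩) <;> assumption
  conv_rhs => rw [hsplit]
  rw [card_union_of_disjoint, card_insert_of_notMem (by simp)]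
  · ring
  · rw [disjoint_left]
    intro y hy hy'
    simp only [mem_filter, mem_insert] at hy hy'
    rcases hy' with rfl | ⟨-, h⟩
    exacts [lt_irrefl _ hy.2, lt_asymm hy.2 h]

structure IntervalSquare (L U : ℕ → ℕ) (r n s i : ℕ) : Prop where
  add_le : n + s ≤ r
  lower_strictMonoOn : StrictMonoOn L (Set.Iio r)
  upper_strictMonoOn : StrictMonoOn U (Set.Iio r)
  lower_le_upper : ∀ j < r, L j ≤ U j
  lower_le : ∀ j < n + s, L j ≤ i
  lt_upper : ∀ j, n ≤ j → j < r → i < U j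

namespace IntervalSquare

variable {L U : ℕ → ℕ} {r n s i : ℕ}

def frame (L U : ℕ → ℕ) (r n s : ℕ) : Finset ℕ := (range n).image L ∪ (Ico (n + s) r).image U

def ends (L U : ℕ → ℕ) (n s : ℕ) : Finset ℕ := (Ico n (n + s)).image L ∪ (Ico n (n + s)).image U

theorem lower_lt_upper (h : IntervalSquare L U r n s i) {a b : ℕ} (ha : a < n + s) (hb : n ≤ b)
    (hbr : b < r) : L a < U b :=
  (h.lower_le a ha).trans_lt (h.lt_upper b hb hbr)

theorem mem_frame_union_ends (h : IntervalSquare L U r n s i) {x : ℕ}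
    (hx : x ∈ frame L U r n s ∪ ends L U n s) :
    (∃ a < n + s, L a = x) ∨ ∃ b, n ≤ b ∧ b < r ∧ U b = x := by
  have := h.add_le
  simp only [frame, ends, mem_union, mem_image, mem_range, mem_Ico] at hx
  rcases hx with (⟨a, ha, rfl⟩ | ⟨b, hb, rfl⟩) | ⟨a, ha, rfl⟩ | ⟨b, hb, rfl⟩
  exacts [.inl ⟨a, by omega, rfl⟩, .inr ⟨b, by omega, hb.2, rfl⟩, .inl ⟨a, ha.2, rfl⟩,
    .inr ⟨b, hb.1, by omega, rfl⟩]

theorem lower_mem_interval_rank (h : IntervalSquare L U r n s i) {X : Finset ℕ}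
    (hframe : frame L U r n s ⊆ X) (hX : X ⊆ frame L U r n s ∪ ends L U n s) {a : ℕ}
    (ha : a < n + s) :
    L #{y ∈ X | y < L a} ≤ L a ∧ L a ≤ U #{y ∈ X | y < L a} := by
  have := h.add_le
  set k := #{y ∈ X | y < L a}
  have hk_le : k ≤ a := by
    calc k ≤ #((range a).image L) := card_le_card fun y hy => by
          obtain ⟨hyX, hya⟩ := mem_filter.1 hy
          rcases h.mem_frame_union_ends (hX hyX) with ⟨b, hb, rfl⟩ | ⟨b, hb, hbr, rfl⟩
          · exact mem_image_of_mem _ <| mem_range.2 <|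
              (h.lower_strictMonoOn.lt_iff_lt (by simp; omega) (by simp; omega)).1 hya
          · exact absurd hya (h.lower_lt_upper ha hb hbr).not_gt
      _ ≤ a := card_image_le.trans (card_range a).le
  have hk_ge : min a n ≤ k := by
    calc min a n = #((range (min a n)).image L) := by
          rw [card_image_of_injOn (h.lower_strictMonoOn.injOn.mono fun j hj => by
            simp at hj ⊢; omega), card_range]
      _ ≤ k := card_le_card fun y hy => by
          obtain ⟨b, hb, rfl⟩ := mem_image.1 hy
          rw [mem_range, lt_min_iff] at hb
          exact mem_filter.2 ⟨hframe (mem_union_left _ (mem_image_of_mem _ (mem_range.2 hb.2))),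
            h.lower_strictMonoOn (by simp; omega) (by simp; omega) hb.1⟩
  refine ⟨h.lower_strictMonoOn.monotoneOn (by simp; omega) (by simp; omega) hk_le, ?_⟩
  by_cases hnk : n ≤ k
  · exact (h.lower_le a ha).trans (h.lt_upper k hnk (by omega)).le
  · rw [show k = a by omega]
    exact h.lower_le_upper a (by omega)

theorem upper_mem_interval_rank (h : IntervalSquare L U r n s i) {X : Finset ℕ}
    (hframe : frame L U r n s ⊆ X) (hX : X ⊆ frame L U r n s ∪ ends L U n s) (hcard : #X = r)
    {b : ℕ} (hb : n ≤ b) (hbr : b < r) (hx : U b ∈ X) :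
    L #{y ∈ X | y < U b} ≤ U b ∧ U b ≤ U #{y ∈ X | y < U b} := by
  have := h.add_le
  have hsplit := card_filter_lt_add_card_filter_gt hx
  set k := #{y ∈ X | y < U b}
  -- rank from above: `k' = r - 1 - k`, and only the `U c` with `c > b` can lie above `U b`
  set k' := #{y ∈ X | U b < y}
  have hk'_le : k' ≤ r - 1 - b := by
    calc k' ≤ #((Ioo b r).image U) := card_le_card fun y hy => by
          obtain ⟨hyX, hby⟩ := mem_filter.1 hy
          rcases h.mem_frame_union_ends (hX hyX) with ⟨a, ha, rfl⟩ | ⟨c, hc, hcr, rfl⟩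
          · exact absurd hby (h.lower_lt_upper ha hb hbr).not_gt
          · exact mem_image_of_mem _ <| mem_Ioo.2
              ⟨(h.upper_strictMonoOn.lt_iff_lt (by simpa) (by simpa)).1 hby, hcr⟩
      _ ≤ r - 1 - b := card_image_le.trans (by simp; omega)
  have hk'_ge : r - 1 - max b (n + s - 1) ≤ k' := by
    calc r - 1 - max b (n + s - 1) = #((Ioo (max b (n + s - 1)) r).image U) := by
          rw [card_image_of_injOn (h.upper_strictMonoOn.injOn.mono fun j hj => by
            simp at hj ⊢; omega), Nat.card_Ioo]
          omega
      _ ≤ k' := card_le_card fun y hy => by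
          obtain ⟨c, hc, rfl⟩ := mem_image.1 hy
          rw [mem_Ioo, max_lt_iff] at hc
          refine mem_filter.2 ⟨hframe (mem_union_right _ (mem_image_of_mem _ ?_)), ?_⟩
          · exact mem_Ico.2 ⟨by omega, hc.2⟩
          · exact h.upper_strictMonoOn (by simpa) (by simpa using hc.2) hc.1.1
  have hb_le : b ≤ k := by omega
  refine ⟨?_, h.upper_strictMonoOn.monotoneOn (by simpa) (by simp; omega) hb_le⟩
  by_cases hkn : k < n + s
  · exact (h.lower_lt_upper hkn hb hbr).le
  · rw [show k = b by omega]
    exact h.lower_le_upper b hbr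

theorem isIntervalTransversal (h : IntervalSquare L U r n s i) {X : Finset ℕ}
    (hframe : frame L U r n s ⊆ X) (hX : X ⊆ frame L U r n s ∪ ends L U n s) (hcard : #X = r) :
    IsIntervalTransversal L U r X := by
  refine isIntervalTransversal_of_rank hcard.le fun x hx => ?_
  rcases h.mem_frame_union_ends (hX hx) with ⟨a, ha, rfl⟩ | ⟨b, hb, hbr, rfl⟩
  · exact h.lower_mem_interval_rank hframe hX ha
  · exact h.upper_mem_interval_rank hframe hX hcard hb hbr hx

theorem disjoint_image_lower_upper (h : IntervalSquare L U r n s i) {t t' : Finset ℕ}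
    (ht : ∀ a ∈ t, a < n + s) (ht' : ∀ b ∈ t', n ≤ b ∧ b < r) :
    Disjoint (t.image L) (t'.image U) := by
  simp only [disjoint_left, mem_image, not_exists, not_and]
  rintro _ ⟨a, ha, rfl⟩ b hb hab
  exact (h.lower_lt_upper (ht a ha) (ht' b hb).1 (ht' b hb).2).ne' hab

theorem card_frame (h : IntervalSquare L U r n s i) : #(frame L U r n s) = r - s := by
  have := h.add_le
  rw [frame, card_union_of_disjoint (h.disjoint_image_lower_upper (by simp; omega)
      (by simp; omega)),
    card_image_of_injOn (h.lower_strictMonoOn.injOn.mono fun j hj => by simp at hj ⊢; omega),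
    card_image_of_injOn (h.upper_strictMonoOn.injOn.mono fun j hj => by simp at hj ⊢; omega),
    card_range, Nat.card_Ico]
  omega

theorem card_ends (h : IntervalSquare L U r n s i) : #(ends L U n s) = 2 * s := by
  have := h.add_le
  rw [ends, card_union_of_disjoint (h.disjoint_image_lower_upper (by simp) (by simp; omega)),
    card_image_of_injOn (h.lower_strictMonoOn.injOn.mono fun j hj => by simp at hj ⊢; omega),
    card_image_of_injOn (h.upper_strictMonoOn.injOn.mono fun j hj => by simp at hj ⊢; omega),
    Nat.card_Ico]
  omega

theorem disjoint_frame_ends (h : IntervalSquare L U r n s i) :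
    Disjoint (frame L U r n s) (ends L U n s) := by
  have := h.add_le
  have hL := h.lower_strictMonoOn.injOn
  have hU := h.upper_strictMonoOn.injOn
  simp only [frame, ends, disjoint_union_left, disjoint_union_right]
  refine ⟨⟨?_, (h.disjoint_image_lower_upper (by simp) (by simp; omega)).symm⟩,
    h.disjoint_image_lower_upper (by simp; omega) (by simp; omega), ?_⟩
  · simp only [disjoint_left, mem_image, mem_range, mem_Ico, not_exists, not_and]
    rintro _ ⟨a, ha, rfl⟩ b hb hab
    have := hL (by simp; omega) (by simp; omega) hab
    omega
  · simp only [disjoint_left, mem_image, mem_Ico, not_exists, not_and]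
    rintro _ ⟨a, ha, rfl⟩ b hb hab
    have := hU (by simp; omega) (by simp; omega) hab
    omega

theorem exists_isIntervalTransversal (h : IntervalSquare L U r n s i) (B : Finset ℕ) :
    ∃ Y ⊆ (frame L U r n s ∪ ends L U n s) ∩ B,
      #(frame L U r n s ∩ B) + min #(ends L U n s ∩ B) s = #Y ∧
      IsIntervalTransversal L U r Y := by
  have hdisj := h.disjoint_frame_ends
  obtain ⟨T₀, hT₀, hT₀card⟩ := exists_subset_card_eq (min_le_left #(ends L U n s ∩ B) s)
  obtain ⟨T, hT₀T, hT, hTcard⟩ := exists_subsuperset_card_eq (hT₀.trans inter_subset_left)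
    (hT₀card.trans_le (min_le_right _ _)) (by rw [h.card_ends]; omega)
  -- `T` extends `T₀` to `s` ends, so that `frame ∪ T` has exactly `r` elements
  have hX : IsIntervalTransversal L U r ↑(frame L U r n s ∪ T) := by
    refine h.isIntervalTransversal subset_union_left (union_subset_union_right hT) ?_
    rw [card_union_of_disjoint (hdisj.mono_right hT), h.card_frame, hTcard]
    have := h.add_le
    omega
  refine ⟨frame L U r n s ∩ B ∪ T₀, ?_, ?_, hX.mono ?_⟩
  · rw [union_inter_distrib_right]
    exact union_subset_union_right hT₀
  · rw [card_union_of_disjoint (hdisj.mono inter_subset_left (hT₀.trans inter_subset_left)),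
      hT₀card]
  · exact coe_subset.2 (union_subset_union inter_subset_left hT₀T)

end IntervalSquare

theorem nCount_take_le (w : List Bool) (p : ℕ) : nCount (w.take p) ≤ nCount w :=
  (List.take_sublist p w).count_le true

namespace IsLatticePair

variable {P Q : List Bool} {m r : ℕ}

theorem exists_hasSquareAt_squareWidth (h : IsLatticePair P Q m r) :
    ∃ i, HasSquareAt P Q (squareWidth P Q) i := by
  refine Nat.sSup_mem (s := {k | ∃ i, HasSquareAt P Q k i}) ⟨0, 0, by simp [HasSquareAt]⟩ ⟨r, ?_⟩
  rintro k ⟨i, -, hk⟩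
  have := nCount_take_le Q i
  rw [h.northQ] at this
  omega

theorem intervalSquare (h : IsLatticePair P Q m r) {s i : ℕ} (hsq : HasSquareAt P Q s i) :
    IntervalSquare (northPos Q) (northPos P) r (nCount (P.take i)) s i := by
  have hQi := hsq.2
  have hP := h.northP
  have hQ := h.northQ
  refine ⟨?_, hQ ▸ northPos_strictMonoOn Q, hP ▸ northPos_strictMonoOn P, fun j hj => ?_,
    fun j hj => ?_, fun j hnj hj => ?_⟩
  · have := nCount_take_le Q i
    omega
  · rw [northPos_le_iff (hQ ▸ hj)]
    exact ((northPos_le_iff (hP ▸ hj) _).1 le_rfl).trans_le (h.notAbove _)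
  · exact (northPos_le_iff (by have := nCount_take_le Q i; omega) i).2 (by omega)
  · by_contra! hle
    have := (northPos_le_iff (hP ▸ hj) i).1 hle
    omega

end IsLatticePair

namespace BTree

variable {α : Type*}

theorem self_mem_subtrees (t : BTree α) : t ∈ t.subtrees := by
  cases t <;> simp [subtrees]

theorem leafList_sublist_of_mem_subtrees {t t' : BTree α} (ht' : t' ∈ t.subtrees) :
    t'.leafList.Sublist t.leafList := by
  induction t with
  | leaf a =>
    rw [subtrees, List.mem_singleton] at ht'
    rw [ht']
  | node l r ihl ihr =>
    simp only [subtrees, List.mem_cons, List.mem_append] at ht'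
    rcases ht' with rfl | h | h
    · exact List.Sublist.refl _
    · exact (ihl h).trans (List.sublist_append_left _ _)
    · exact (ihr h).trans (List.sublist_append_right _ _)

theorem exists_mem_subtrees_countP_mem_Icc (p : α → Bool) {q : ℕ} (hq : 2 ≤ q) (t : BTree α)
    (ht : q ≤ t.leafList.countP p) :
    ∃ t' ∈ t.subtrees, q ≤ t'.leafList.countP p ∧ t'.leafList.countP p ≤ 2 * q - 2 := by
  induction t with
  | leaf a =>
    have : (leaf a).leafList.countP p ≤ 1 := by
      simp only [leafList, List.countP_singleton]
      split <;> simp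
    omega
  | node l r ihl ihr =>
    have hsubl : l.subtrees ⊆ (node l r).subtrees := by simp [subtrees]
    have hsubr : r.subtrees ⊆ (node l r).subtrees := by simp [subtrees]
    by_cases hl : q ≤ l.leafList.countP p
    · obtain ⟨t', ht', h⟩ := ihl hl
      exact ⟨t', hsubl ht', h⟩
    by_cases hr : q ≤ r.leafList.countP p
    · obtain ⟨t', ht', h⟩ := ihr hr
      exact ⟨t', hsubr ht', h⟩
    refine ⟨node l r, self_mem_subtrees _, ht, ?_⟩
    simp only [leafList, List.countP_append]
    omega

end BTree

theorem List.Nodup.countP_mem_eq_card_inter {α : Type*} [DecidableEq α] {l : List α}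
    (hl : l.Nodup) (S : Finset α) : l.countP (· ∈ S) = #(S ∩ l.toFinset) := by
  rw [List.countP_eq_length_filter, ← List.toFinset_card_of_nodup (hl.filter _),
    List.toFinset_filter, inter_comm]
  simp only [decide_eq_true_eq, filter_mem_eq_inter]

section Matroid

variable {α : Type*} {M : Matroid α}

theorem le_eRk_of_indep {I A : Set α} (hI : M.Indep I) (hIA : I ⊆ A) :
    I.encard ≤ _root_.eRk M A :=
  le_iSup (fun I : {I : Set α // M.Indep I ∧ I ⊆ A} => (I : Set α).encard) ⟨I, hI, hIA⟩

theorem add_one_le_lamVal {A : Set α} {r q : ℕ} (hE : _root_.eRk M M.E ≤ r)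
    (h : ((r + q : ℕ) : ℕ∞) ≤ _root_.eRk M A + _root_.eRk M (M.E \ A)) :
    ((q + 1 : ℕ) : ℕ∞) ≤ lamVal M A := by
  have hq : (q : ℕ∞) ≤ _root_.eRk M A + _root_.eRk M (M.E \ A) - _root_.eRk M M.E := by
    refine ENat.le_sub_of_add_le_left (hE.trans_lt (ENat.natCast_lt_top r)).ne ?_
    calc _root_.eRk M M.E + q ≤ r + q := add_le_add_left hE _
      _ ≤ _ := by exact_mod_cast h
  push_cast
  exact add_le_add_left hq 1

theorem lamVal_le_decompWidth {t t' : BTree α} (ht' : t' ∈ t.subtrees) :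
    lamVal M {x | x ∈ t'.leafList} ≤ decompWidth M t :=
  List.le_max_of_le' 0 (List.mem_map_of_mem ht') le_rfl

theorem one_le_decompWidth (t : BTree α) : 1 ≤ decompWidth M t :=
  le_add_self.trans (lamVal_le_decompWidth t.self_mem_subtrees)

theorem exists_decompWidth_eq_branchWidth (h : branchWidth M ≠ ⊤) :
    ∃ t, IsBranchDecomp M t ∧ decompWidth M t = branchWidth M := by
  have hne : {w | ∃ t, IsBranchDecomp M t ∧ decompWidth M t = w}.Nonempty := by
    refine Set.nonempty_iff_ne_empty.2 fun he => h ?_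
    rw [branchWidth, he, sInf_empty]
  exact csInf_mem hne

end Matroid

namespace IsLPM

variable {M : Matroid ℕ} {P Q : List Bool} {m r : ℕ}

theorem eRk_ground_le (hM : IsLPM M P Q m r) : _root_.eRk M M.E ≤ r := by
  refine iSup_le fun ⟨I, hI, _⟩ => ?_
  obtain ⟨f, hinj, hf⟩ := ((hM.2.2 I).1 hI).2
  calc I.encard = (f '' I).encard := hinj.encard_image.symm
    _ ≤ (Set.Iio r).encard := Set.encard_le_encard (Set.image_subset_iff.2 fun x hx => (hf x hx).1)
    _ = r := by rw [← coe_range, Set.encard_coe_eq_coe_finsetCard, card_range]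

open IntervalSquare in
theorem frame_union_ends_subset (hM : IsLPM M P Q m r) {n s i : ℕ}
    (h : IntervalSquare (northPos Q) (northPos P) r n s i) :
    frame (northPos Q) (northPos P) r n s ∪ ends (northPos Q) (northPos P) n s ⊆ Icc 1 (m + r) :=
  fun x hx => by
    have := h.add_le
    rcases h.mem_frame_union_ends hx with ⟨a, ha, rfl⟩ | ⟨b, -, hb, rfl⟩
    · simpa only [hM.1.lenQ] using northPos_mem_Icc (w := Q) (j := a) (hM.1.northQ ▸ by omega)
    · simpa only [hM.1.lenP] using northPos_mem_Icc (w := P) (j := b) (hM.1.northP ▸ hb)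

open IntervalSquare in
theorem card_frame_inter_add_min_le_eRk (hM : IsLPM M P Q m r) {n s i : ℕ}
    (h : IntervalSquare (northPos Q) (northPos P) r n s i) (B : Finset ℕ) :
    ((#(frame (northPos Q) (northPos P) r n s ∩ B) +
      min #(ends (northPos Q) (northPos P) n s ∩ B) s : ℕ) : ℕ∞) ≤ _root_.eRk M B := by
  obtain ⟨Y, hYB, hcard, hY⟩ := h.exists_isIntervalTransversal B
  have hYE : ↑Y ⊆ M.E := by
    rw [hM.2.1, ← coe_Icc, coe_subset]
    exact hYB.trans (inter_subset_left.trans (hM.frame_union_ends_subset h))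
  rw [hcard, ← Set.encard_coe_eq_coe_finsetCard]
  exact le_eRk_of_indep ((hM.2.2 Y).2 ⟨hYE, hY⟩) (coe_subset.2 (hYB.trans inter_subset_right))

open IntervalSquare in
theorem add_one_le_lamVal_of_intervalSquare (hM : IsLPM M P Q m r) {n s i : ℕ}
    (h : IntervalSquare (northPos Q) (northPos P) r n s i) {A : Finset ℕ} {q : ℕ}
    (hq : q ≤ #(ends (northPos Q) (northPos P) n s ∩ A))
    (hq' : #(ends (northPos Q) (northPos P) n s ∩ A) ≤ 2 * q - 2) (hqs : 3 * q ≤ 2 * s + 2) :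
    ((q + 1 : ℕ) : ℕ∞) ≤ lamVal M A := by
  have hFS := hM.frame_union_ends_subset h
  have hcompl : ∀ G ⊆ Icc 1 (m + r), #(G ∩ (Icc 1 (m + r) \ A)) + #(G ∩ A) = #G := fun G hG => by
    rw [← inter_sdiff_assoc, inter_eq_left.2 hG, card_sdiff_add_card_inter]
  have hF := hcompl _ (subset_union_left.trans hFS)
  have hS := hcompl _ (subset_union_right.trans hFS)
  rw [h.card_frame] at hF
  rw [h.card_ends] at hS
  refine add_one_le_lamVal hM.eRk_ground_le ?_
  rw [hM.2.1, ← coe_Icc, ← coe_sdiff]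
  refine le_trans ?_ (add_le_add (hM.card_frame_inter_add_min_le_eRk h A)
    (hM.card_frame_inter_add_min_le_eRk h _))
  rw [← Nat.cast_add, Nat.cast_le]
  have := h.add_le
  omega

theorem le_decompWidth_of_hasSquareAt (hM : IsLPM M P Q m r) {s i : ℕ}
    (hsq : HasSquareAt P Q s i) (hs : 2 ≤ s) {t : BTree ℕ} (ht : IsBranchDecomp M t) :
    (((2 * s + 2) / 3 + 1 : ℕ) : ℕ∞) ≤ decompWidth M t := by
  have h := hM.1.intervalSquare hsq
  have hleaves : t.leafList.toFinset = Icc 1 (m + r) := by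
    rw [← coe_inj, List.coe_toFinset, ht.2, hM.2.1, coe_Icc]
  have hroot : (2 * s + 2) / 3 ≤ t.leafList.countP
      (· ∈ IntervalSquare.ends (northPos Q) (northPos P) (nCount (P.take i)) s) := by
    rw [ht.1.countP_mem_eq_card_inter, hleaves,
      inter_eq_left.2 (subset_union_right.trans (hM.frame_union_ends_subset h)), h.card_ends]
    omega
  obtain ⟨t', ht', hq, hq'⟩ := BTree.exists_mem_subtrees_countP_mem_Icc _ (by omega) t hroot
  rw [(ht.1.sublist (BTree.leafList_sublist_of_mem_subtrees ht')).countP_mem_eq_card_inter]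
    at hq hq'
  refine le_trans ?_ (lamVal_le_decompWidth ht')
  rw [← List.coe_toFinset]
  exact hM.add_one_le_lamVal_of_intervalSquare h hq hq' (by omega)

end IsLPM

/-- If `M = M[P,Q]` has branch-width at most `k`, then the square-width of the
presentation `[P,Q]` is strictly less than `⌈3k/2⌉`. -/
theorem stmt_10 (P Q : List Bool) (m r k : ℕ) (M : Matroid ℕ)
    (hM : IsLPM M P Q m r) (hbw : branchWidth M ≤ (k : ℕ∞)) :
    squareWidth P Q < (3 * k + 1) / 2 := by
  obtain ⟨t, ht, hwidth⟩ :=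
    exists_decompWidth_eq_branchWidth (hbw.trans_lt (ENat.natCast_lt_top k)).ne
  rw [← hwidth] at hbw
  have hk : 1 ≤ k := by exact_mod_cast (one_le_decompWidth t).trans hbw
  obtain ⟨i, hsq⟩ := hM.1.exists_hasSquareAt_squareWidth
  by_contra! hs
  have := (hM.le_decompWidth_of_hasSquareAt hsq (by omega) ht).trans hbw
  norm_cast at this
  omega
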